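/- arXiv:1402.3007 — 2 statements merged into one kernel-verified Lean document; each statement's English description precedes it below -/
import Mathlib

section
/- Every complex zero of Δ_L(k) = π( σ_L(e^{2iak}+1)(e^{2ibkσ_L/σ_R}−1) + σ_R(e^{2iak}−1)(e^{2ibkσ_L/σ_R}+1) ) is real. Equivalently, if k ∈ ℂ with Δ_L(k)=0, then Im k = 0. -/
/-!
Write `u = e^{2iak}` and `v = e^{2ibkσ_L/σ_R}`. Multiplying `Δ_L/π` by `conj((u+1)(v+1))` and
taking real parts gives `σ_L |u+1|² (|v|²-1) + σ_R |v+1|² (|u|²-1)`, since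
`Re((w-1) conj(w+1)) = |w|²-1`. If `Im k ≠ 0`, then `|u| = e^{-2a Im k}` and
`|v| = e^{-2b(σ_L/σ_R) Im k}` lie on the same side of `1`, so both terms have the same strict
sign and `Δ_L(k) ≠ 0`.
-/

open Complex Real ComplexConjugate

lemma re_sub_one_mul_conj_add_one (w : ℂ) :
    ((w - 1) * conj (w + 1)).re = ‖w‖ ^ 2 - 1 := by
  rw [← Complex.normSq_eq_norm_sq, Complex.normSq_apply]
  simp only [mul_re, sub_re, one_re, conj_re, add_re, sub_im, one_im, conj_im, add_im]
  ring

lemma re_combination_mul_conj (p q : ℝ) (u v : ℂ) :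
    (((p : ℂ) * (u + 1) * (v - 1) + q * (u - 1) * (v + 1)) * conj ((u + 1) * (v + 1))).re =
      p * ‖u + 1‖ ^ 2 * (‖v‖ ^ 2 - 1) + q * ‖v + 1‖ ^ 2 * (‖u‖ ^ 2 - 1) := by
  have h : ((p : ℂ) * (u + 1) * (v - 1) + q * (u - 1) * (v + 1)) * conj ((u + 1) * (v + 1)) =
      (p * ‖u + 1‖ ^ 2 : ℝ) * ((v - 1) * conj (v + 1)) +
        (q * ‖v + 1‖ ^ 2 : ℝ) * ((u - 1) * conj (u + 1)) := by
    push_cast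
    rw [← Complex.mul_conj', ← Complex.mul_conj', map_mul]
    ring
  rw [h, add_re, re_ofReal_mul, re_ofReal_mul, re_sub_one_mul_conj_add_one,
    re_sub_one_mul_conj_add_one]

lemma add_one_mul_sub_one_combination_ne_zero {p q : ℝ} (hp : 0 < p) (hq : 0 < q) {u v : ℂ}
    (huv : 0 < (‖u‖ - 1) * (‖v‖ - 1)) :
    (p : ℂ) * (u + 1) * (v - 1) + q * (u - 1) * (v + 1) ≠ 0 := by
  intro h
  have hre := re_combination_mul_conj p q u v
  rw [h, zero_mul, zero_re] at hre
  have hu : u + 1 ≠ 0 := by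
    intro hu
    have : ‖u‖ = 1 := by rw [eq_neg_of_add_eq_zero_left hu, norm_neg, norm_one]
    simp [this] at huv
  have hsq : 0 < (‖u‖ ^ 2 - 1) * (‖v‖ ^ 2 - 1) := by
    have : (‖u‖ ^ 2 - 1) * (‖v‖ ^ 2 - 1) =
        (‖u‖ - 1) * (‖v‖ - 1) * ((‖u‖ + 1) * (‖v‖ + 1)) := by ring
    rw [this]
    positivity
  have hv : ‖v‖ ^ 2 - 1 ≠ 0 := right_ne_zero_of_mul hsq.ne'
  have hpos : 0 < p * ‖u + 1‖ ^ 2 * (‖v‖ ^ 2 - 1) ^ 2 +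
      q * ‖v + 1‖ ^ 2 * ((‖u‖ ^ 2 - 1) * (‖v‖ ^ 2 - 1)) :=
    add_pos_of_pos_of_nonneg (by positivity) (by positivity)
  exact hpos.ne' (by linear_combination -(‖v‖ ^ 2 - 1) * hre)

lemma norm_exp_two_mul_I_mul (c : ℝ) (k : ℂ) :
    ‖exp (2 * I * c * k)‖ = Real.exp (-(2 * c * k.im)) := by
  rw [Complex.norm_exp]
  congr 1
  simp [mul_re, mul_im]

lemma exp_sub_one_mul_exp_sub_one_pos {x y : ℝ} (hxy : 0 < x * y) :
    0 < (Real.exp x - 1) * (Real.exp y - 1) := by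
  rcases pos_and_pos_or_neg_and_neg_of_mul_pos hxy with ⟨hx, hy⟩ | ⟨hx, hy⟩
  · exact mul_pos (sub_pos.2 (Real.one_lt_exp_iff.2 hx)) (sub_pos.2 (Real.one_lt_exp_iff.2 hy))
  · exact mul_pos_of_neg_of_neg (sub_neg.2 (Real.exp_lt_one_iff.2 hx))
      (sub_neg.2 (Real.exp_lt_one_iff.2 hy))

/-- Every complex zero of the determinant
`Δ_L(k) = π(σ_L(e^{2iak}+1)(e^{2ibkσ_L/σ_R}−1) + σ_R(e^{2iak}−1)(e^{2ibkσ_L/σ_R}+1))`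
is real. -/
theorem DeltaL_zeros_real
    (a b σL σR : ℝ) (ha : 0 < a) (hb : 0 < b) (hσL : 0 < σL) (hσR : 0 < σR)
    (k : ℂ)
    (hzero : (π : ℂ) *
      ((σL : ℂ) * (Complex.exp (2 * Complex.I * (a : ℂ) * k) + 1) *
        (Complex.exp (2 * Complex.I * (b : ℂ) * k * (σL : ℂ) / (σR : ℂ)) - 1) +
       (σR : ℂ) * (Complex.exp (2 * Complex.I * (a : ℂ) * k) - 1) *
        (Complex.exp (2 * Complex.I * (b : ℂ) * k * (σL : ℂ) / (σR : ℂ)) + 1)) = 0) :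
    k.im = 0 := by
  have hexp : 2 * I * (b : ℂ) * k * (σL : ℂ) / (σR : ℂ) =
      2 * I * ((b * σL / σR : ℝ) : ℂ) * k := by
    push_cast
    ring
  rw [hexp] at hzero
  have hΔ := (mul_eq_zero.1 hzero).resolve_left (ofReal_ne_zero.2 Real.pi_ne_zero)
  by_contra him
  refine add_one_mul_sub_one_combination_ne_zero hσL hσR ?_ hΔ
  rw [norm_exp_two_mul_I_mul, norm_exp_two_mul_I_mul]
  apply exp_sub_one_mul_exp_sub_one_pos
  have hprod : -(2 * a * k.im) * -(2 * (b * σL / σR) * k.im) =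
      4 * (a * (b * σL / σR)) * k.im ^ 2 := by
    ring
  rw [hprod]
  exact mul_pos (by positivity) (sq_pos_of_ne_zero him)
end

section
/- For positive reals σ_L, σ_M, σ_R, the strict inequality (σ_L+σ_M)(σ_M+σ_R) > |σ_L−σ_M|·|σ_M−σ_R| holds. Consequently, for a > 0 the entire function k ↦ (σ_L−σ_M)(σ_M−σ_R) + e^{4iakσ_L/σ_M}(σ_L+σ_M)(σ_M+σ_R) has no zeros in the open lower half-plane {Im k < 0}, and the function k ↦ (σ_L+σ_M)(σ_M+σ_R) + e^{4iakσ_R/σ_M}(σ_L−σ_M)(σ_M−σ_R) has no zeros in the open upper half-plane {Im k > 0}. -/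
/-!
Each factor `|σ - σ'|` is strictly smaller than `σ + σ'` for positive `σ, σ'`, so the real
coefficient `A = (σL - σM)(σM - σR)` is strictly smaller in modulus than `B = (σL + σM)(σM + σR)`.
The exponent `4iakσ/σM` has real part `-(4aσ/σM) Im k`, so the exponential has modulus `≥ 1`
in the lower and `≤ 1` in the upper half-plane. In either case one summand of the determinant
strictly dominates the other, hence their sum cannot vanish.
-/

open Complex Real

lemma abs_sub_lt_add_of_pos {x y : ℝ} (hx : 0 < x) (hy : 0 < y) : |x - y| < x + y :=
  abs_sub_lt_iff.2 ⟨by linarith, by linarith⟩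

lemma abs_sub_mul_abs_sub_lt_add_mul_add {x y z : ℝ} (hx : 0 < x) (hy : 0 < y) (hz : 0 < z) :
    |x - y| * |y - z| < (x + y) * (y + z) :=
  mul_lt_mul'' (abs_sub_lt_add_of_pos hx hy) (abs_sub_lt_add_of_pos hy hz)
    (abs_nonneg _) (abs_nonneg _)

lemma add_ne_zero_of_norm_lt {E : Type*} [SeminormedAddCommGroup E] {x y : E}
    (h : ‖x‖ < ‖y‖) : x + y ≠ 0 := by
  intro hxy
  rw [add_eq_zero_iff_eq_neg] at hxy
  rw [hxy, norm_neg] at h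
  exact lt_irrefl _ h

namespace Complex

lemma add_exp_mul_ne_zero_of_norm_lt_of_re_nonneg {x y z : ℂ} (hxy : ‖x‖ < ‖y‖)
    (hz : 0 ≤ z.re) : x + exp z * y ≠ 0 := by
  refine add_ne_zero_of_norm_lt (hxy.trans_le ?_)
  rw [norm_mul]
  exact le_mul_of_one_le_left (norm_nonneg y) (by rw [norm_exp]; exact Real.one_le_exp hz)

lemma add_exp_mul_ne_zero_of_norm_lt_of_re_nonpos {x y z : ℂ} (hxy : ‖x‖ < ‖y‖)
    (hz : z.re ≤ 0) : y + exp z * x ≠ 0 := by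
  rw [add_comm]
  refine add_ne_zero_of_norm_lt (lt_of_le_of_lt ?_ hxy)
  rw [norm_mul]
  exact mul_le_of_le_one_left (norm_nonneg x) (by rw [norm_exp]; exact Real.exp_le_one_iff.2 hz)

lemma re_I_mul_ofReal_mul (c : ℝ) (k : ℂ) : (I * c * k).re = -(c * k.im) := by
  simp

end Complex

/-- For positive `σ_L, σ_M, σ_R` the strict inequality
`(σ_L+σ_M)(σ_M+σ_R) > |σ_L−σ_M|·|σ_M−σ_R|` holds; consequently the determinant
functions of the three-layer infinite-domain problem have no zeros in the open
lower (resp. upper) half-plane. -/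
theorem three_layer_determinants_nonvanishing
    (a σL σM σR : ℝ) (ha : 0 < a) (hσL : 0 < σL) (hσM : 0 < σM) (hσR : 0 < σR) :
    ((σL + σM) * (σM + σR) > |σL - σM| * |σM - σR|) ∧
    (∀ k : ℂ, k.im < 0 →
      ((σL:ℂ) - σM) * ((σM:ℂ) - σR) +
        Complex.exp (4 * Complex.I * (a:ℂ) * k * (σL:ℂ) / (σM:ℂ)) *
          ((σL:ℂ) + σM) * ((σM:ℂ) + σR) ≠ 0) ∧
    (∀ k : ℂ, 0 < k.im →
      ((σL:ℂ) + σM) * ((σM:ℂ) + σR) +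
        Complex.exp (4 * Complex.I * (a:ℂ) * k * (σR:ℂ) / (σM:ℂ)) *
          ((σL:ℂ) - σM) * ((σM:ℂ) - σR) ≠ 0) := by
  have hreal := abs_sub_mul_abs_sub_lt_add_mul_add hσL hσM hσR
  have hnorm : ‖((σL:ℂ) - σM) * ((σM:ℂ) - σR)‖ < ‖((σL:ℂ) + σM) * ((σM:ℂ) + σR)‖ := by
    rwa [← ofReal_sub, ← ofReal_sub, ← ofReal_add, ← ofReal_add, ← ofReal_mul, ← ofReal_mul,
      norm_real, norm_real, Real.norm_eq_abs, abs_mul,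
      Real.norm_of_nonneg (by positivity)]
  have hexponent (σ : ℝ) (k : ℂ) :
      (4 * I * a * k * σ / σM : ℂ).re = -((4 * a * σ / σM) * k.im) := by
    rw [← re_I_mul_ofReal_mul]
    push_cast
    ring_nf
  refine ⟨hreal, fun k hk => ?_, fun k hk => ?_⟩
  · rw [mul_assoc (cexp _)]
    refine add_exp_mul_ne_zero_of_norm_lt_of_re_nonneg hnorm ?_
    rw [hexponent, neg_nonneg]
    exact mul_nonpos_of_nonneg_of_nonpos (by positivity) hk.le
  · rw [mul_assoc (cexp _)]
    refine add_exp_mul_ne_zero_of_norm_lt_of_re_nonpos hnorm ?_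
    rw [hexponent, neg_nonpos]
    exact mul_nonneg (by positivity) hk.le
end
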